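/- Let G = (V,E) be a graph on vertex set {1,…,n}, let C_Z = −Σ_{⟨i,j⟩∈E} Z_i Z_j and B = Σ_{i=1}^n X_i on the n-qubit Hilbert space, and let w ∈ {−1,1}ⁿ be a string with C_Z(w) = −Σ_{⟨i,j⟩∈E} w_i w_j > 0. Then for every β ∈ ℝ, ⟨w| e^{iβB} C_Z e^{−iβB} |w⟩ ≤ C_Z(w); that is, the p = 1/2 warm-start QAOA cannot improve the cost of any good string. -/

import Mathlib

/-!
Conjugation by the diagonal involution `Z_i Z_j` flips the signs of `X_i` and `X_j` in `B` and
fixes the other `X_k`, so `e^{iβB} Z_i Z_j e^{-iβB} = e^{2iβX_i} e^{2iβX_j} Z_i Z_j`. As `X² = 1`,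
`e^{2iβX} = cos 2β + i sin 2β X`, and `X_i`, `X_j`, `X_i X_j` have zero diagonal, so each edge
contributes `cos² 2β · w_i w_j`. Hence the expectation is `cos² 2β · C_Z(w) ≤ C_Z(w)`.
-/

open scoped Matrix

/-- The type of `n`-bit strings, identified with `{-1,1}ⁿ` via `sgn`. -/
abbrev Str (n : ℕ) := Fin n → Bool

/-- The `±1` value of a bit. -/
noncomputable def sgn (b : Bool) : ℝ := if b then 1 else -1

/-- Matrices on the `n`-qubit Hilbert space `ℂ^(2^n)`. -/
abbrev Mat (n : ℕ) := Matrix (Str n) (Str n) ℂ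

/-- The Pauli `Z` operator on qubit `i`. -/
noncomputable def PauliZ (n : ℕ) (i : Fin n) : Mat n :=
  Matrix.diagonal fun z => (sgn (z i) : ℂ)

/-- The Pauli `X` operator on qubit `i`. -/
noncomputable def PauliX (n : ℕ) (i : Fin n) : Mat n :=
  Matrix.of fun z z' => if z' = Function.update z i (!z i) then 1 else 0

/-- The mixing operator `B = Σᵢ Xᵢ`. -/
noncomputable def mixer (n : ℕ) : Mat n := ∑ i, PauliX n i

/-- Matrix exponential. -/
noncomputable def mexp {ι : Type*} [Fintype ι] [DecidableEq ι] (A : Matrix ι ι ℂ) : Matrix ι ι ℂ :=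
  NormedSpace.exp A

/-- The operator `Z_i Z_j` attached to the edge `⟨i,j⟩`, as a function of the
unordered edge. -/
noncomputable def ZZedge (n : ℕ) : Sym2 (Fin n) → Mat n :=
  Sym2.lift ⟨fun i j => PauliZ n i * PauliZ n j, fun i j => by
    simp [PauliZ, Matrix.diagonal_mul_diagonal, mul_comm]⟩

/-- The MaxCut operator `C_Z = −Σ_{⟨i,j⟩∈E} Z_i Z_j`. -/
noncomputable def CZop (n : ℕ) (G : SimpleGraph (Fin n)) [DecidableRel G.Adj] : Mat n :=
  -∑ e ∈ G.edgeFinset, ZZedge n e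

/-- The classical value `C_Z(w) = −Σ_{⟨i,j⟩∈E} w_i w_j`. -/
noncomputable def CZval (n : ℕ) (G : SimpleGraph (Fin n)) [DecidableRel G.Adj]
    (w : Str n) : ℝ :=
  -∑ e ∈ G.edgeFinset, Sym2.lift ⟨fun i j => sgn (w i) * sgn (w j), fun i j => by ring⟩ e

open NormedSpace

theorem exp_smul_of_mul_self_eq_one {𝔸 : Type*} [NormedRing 𝔸] [NormedAlgebra ℂ 𝔸]
    [CompleteSpace 𝔸] {x : 𝔸} (hx : x * x = 1) (c : ℂ) :
    exp (c • x) = Complex.cosh c • 1 + Complex.sinh c • x := by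
  have hpow : ∀ k, x ^ (2 * k) = 1 := fun k => by rw [pow_mul, sq, hx, one_pow]
  refine (exp_series_hasSum_exp' (𝕂 := ℂ) (c • x)).unique (HasSum.even_add_odd ?_ ?_)
  · convert (Complex.hasSum_cosh c).smul_const (1 : 𝔸) using 2 with k
    rw [smul_pow, hpow, smul_smul, div_eq_inv_mul]
  · convert (Complex.hasSum_sinh c).smul_const x using 2 with k
    rw [smul_pow, pow_succ x, hpow, one_mul, smul_smul, div_eq_inv_mul]

section Matrix

variable {m : Type*} [Fintype m] [DecidableEq m]

theorem Matrix.exp_smul_of_mul_self_eq_one {X : Matrix m m ℂ} (hX : X * X = 1) (c : ℂ) :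
    exp (c • X) = Complex.cosh c • 1 + Complex.sinh c • X :=
  open scoped Matrix.Norms.Operator in _root_.exp_smul_of_mul_self_eq_one hX c

theorem Matrix.mul_exp_eq_exp_conj_mul {P : Matrix m m ℂ} (hP : P * P = 1) (A : Matrix m m ℂ) :
    P * exp A = exp (P * A * P) * P := by
  have h : SemiconjBy P A (P * A * P) := by
    rw [SemiconjBy, mul_assoc _ P, hP, mul_one]
  open scoped Matrix.Norms.Operator in exact h.exp_right

end Matrix

section Qubits

variable {n : ℕ}

def bitFlip (i : Fin n) (z : Str n) : Str n := Function.update z i (!z i)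

theorem bitFlip_apply_self (i : Fin n) (z : Str n) : bitFlip i z i = !z i := by
  simp [bitFlip]

theorem bitFlip_apply_of_ne {i j : Fin n} (h : j ≠ i) (z : Str n) : bitFlip i z j = z j := by
  simp [bitFlip, h]

theorem bitFlip_bitFlip (i : Fin n) (z : Str n) : bitFlip i (bitFlip i z) = z := by
  simp [bitFlip]

theorem bitFlip_comm (i j : Fin n) (z : Str n) :
    bitFlip i (bitFlip j z) = bitFlip j (bitFlip i z) := by
  funext k
  by_cases hi : k = i <;> by_cases hj : k = j <;> simp_all [bitFlip]

theorem bitFlip_ne (i : Fin n) (z : Str n) : bitFlip i z ≠ z := fun h => by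
  simpa [bitFlip_apply_self] using congrFun h i

theorem bitFlip_bitFlip_ne {i j : Fin n} (h : i ≠ j) (z : Str n) :
    bitFlip j (bitFlip i z) ≠ z := fun hz => by
  simpa [bitFlip_apply_of_ne h, bitFlip_apply_self] using congrFun hz i

theorem sgn_mul_self (b : Bool) : sgn b * sgn b = 1 := by
  cases b <;> norm_num [sgn]

theorem sgn_not (b : Bool) : sgn (!b) = -sgn b := by
  cases b <;> simp [sgn]

theorem pauliX_apply (i : Fin n) (z z' : Str n) :
    PauliX n i z z' = if z' = bitFlip i z then 1 else 0 := rfl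

theorem pauliX_apply_self (i : Fin n) (z : Str n) : PauliX n i z z = 0 :=
  if_neg (bitFlip_ne i z).symm

theorem pauliX_mul_apply (i : Fin n) (M : Mat n) (z z' : Str n) :
    (PauliX n i * M) z z' = M (bitFlip i z) z' := by
  simp [Matrix.mul_apply, pauliX_apply]

theorem pauliX_mul_self (i : Fin n) : PauliX n i * PauliX n i = 1 := by
  ext z z'
  rw [pauliX_mul_apply, pauliX_apply, bitFlip_bitFlip, Matrix.one_apply]
  exact if_congr eq_comm rfl rfl

theorem pauliX_commute (i j : Fin n) : Commute (PauliX n i) (PauliX n j) := by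
  ext z z'
  rw [pauliX_mul_apply, pauliX_mul_apply, pauliX_apply, pauliX_apply, bitFlip_comm]

theorem pauliX_mul_pauliX_apply_self {i j : Fin n} (h : i ≠ j) (z : Str n) :
    (PauliX n i * PauliX n j) z z = 0 := by
  rw [pauliX_mul_apply, pauliX_apply, if_neg (bitFlip_bitFlip_ne h z).symm]

theorem commute_mixer_pauliX (i : Fin n) : Commute (mixer n) (PauliX n i) :=
  Commute.sum_left _ _ _ fun j _ => pauliX_commute j i

theorem pauliZ_mul_self (i : Fin n) : PauliZ n i * PauliZ n i = 1 := by
  rw [PauliZ, Matrix.diagonal_mul_diagonal, ← Matrix.diagonal_one]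
  congr 1
  funext z
  exact_mod_cast sgn_mul_self (z i)

theorem pauliZ_commute (i j : Fin n) : Commute (PauliZ n i) (PauliZ n j) := by
  simp only [Commute, SemiconjBy, PauliZ, Matrix.diagonal_mul_diagonal, mul_comm]

theorem pauliZ_mul_pauliX_mul_pauliZ (i k : Fin n) :
    PauliZ n k * PauliX n i * PauliZ n k = if i = k then -PauliX n i else PauliX n i := by
  ext z z'
  rw [PauliZ, Matrix.mul_diagonal, Matrix.diagonal_mul, pauliX_apply]
  by_cases hz : z' = bitFlip i z
  · subst hz
    by_cases hik : i = k
    · subst hik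
      simp [pauliX_apply, bitFlip_apply_self, sgn_not, ← Complex.ofReal_mul, sgn_mul_self]
    · simp [pauliX_apply, bitFlip_apply_of_ne (Ne.symm hik), hik, ← Complex.ofReal_mul,
        sgn_mul_self]
  · split_ifs <;> simp [pauliX_apply, hz]

theorem pauliZ_mul_mixer_mul_pauliZ (k : Fin n) :
    PauliZ n k * mixer n * PauliZ n k = mixer n - 2 • PauliX n k := by
  have hmixer := Finset.add_sum_erase Finset.univ (PauliX n) (Finset.mem_univ k)
  rw [mixer, Finset.mul_sum, Finset.sum_mul, ← Finset.add_sum_erase _ _ (Finset.mem_univ k),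
    ← hmixer, pauliZ_mul_pauliX_mul_pauliZ, if_pos rfl,
    Finset.sum_congr rfl fun i hi => by
      rw [pauliZ_mul_pauliX_mul_pauliZ, if_neg (Finset.ne_of_mem_erase hi)]]
  abel

theorem pauliZZ_mul_mixer_mul_pauliZZ {i j : Fin n} (hij : i ≠ j) :
    PauliZ n i * PauliZ n j * mixer n * (PauliZ n i * PauliZ n j)
      = mixer n - 2 • PauliX n i - 2 • PauliX n j := by
  calc PauliZ n i * PauliZ n j * mixer n * (PauliZ n i * PauliZ n j)
      = PauliZ n i * (PauliZ n j * mixer n * PauliZ n j) * PauliZ n i := by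
        simp only [mul_assoc]; rw [(pauliZ_commute i j).eq]
    _ = PauliZ n i * mixer n * PauliZ n i - 2 • (PauliZ n i * PauliX n j * PauliZ n i) := by
        rw [pauliZ_mul_mixer_mul_pauliZ, mul_sub, sub_mul, mul_smul_comm, smul_mul_assoc]
    _ = mixer n - 2 • PauliX n i - 2 • PauliX n j := by
        rw [pauliZ_mul_mixer_mul_pauliZ, pauliZ_mul_pauliX_mul_pauliZ, if_neg hij.symm]

theorem pauliZZ_mul_self (i j : Fin n) :
    PauliZ n i * PauliZ n j * (PauliZ n i * PauliZ n j) = 1 := by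
  rw [(pauliZ_commute j i).mul_mul_mul_comm, pauliZ_mul_self, pauliZ_mul_self, one_mul]

theorem exp_mixer_conj_pauliZZ {i j : Fin n} (hij : i ≠ j) (c : ℂ) :
    exp (c • mixer n) * (PauliZ n i * PauliZ n j) * exp ((-c) • mixer n)
      = exp ((2 * c) • PauliX n i) * exp ((2 * c) • PauliX n j) * (PauliZ n i * PauliZ n j) := by
  set P := PauliZ n i * PauliZ n j
  have hconj : P * ((-c) • mixer n) * P = (-c) • (mixer n - 2 • PauliX n i - 2 • PauliX n j) := by
    rw [mul_smul_comm, smul_mul_assoc, pauliZZ_mul_mixer_mul_pauliZZ hij]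
  have hcomm : Commute (c • mixer n) ((-c) • (mixer n - 2 • PauliX n i - 2 • PauliX n j)) :=
    ((((Commute.refl _).sub_right ((commute_mixer_pauliX i).smul_right 2)).sub_right
      ((commute_mixer_pauliX j).smul_right 2)).smul_right _).smul_left _
  have hsum : c • mixer n + (-c) • (mixer n - 2 • PauliX n i - 2 • PauliX n j)
      = (2 * c) • PauliX n i + (2 * c) • PauliX n j := by
    module
  rw [mul_assoc, Matrix.mul_exp_eq_exp_conj_mul (pauliZZ_mul_self i j), hconj, ← mul_assoc,
    ← Matrix.exp_add_of_commute _ _ hcomm, hsum, Matrix.exp_add_of_commute _ _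
      (((pauliX_commute i j).smul_left _).smul_right _)]

theorem exp_smul_pauliX_mul_exp_smul_pauliX_apply_self {i j : Fin n} (hij : i ≠ j) (c : ℂ)
    (z : Str n) :
    (exp (c • PauliX n i) * exp (c • PauliX n j)) z z = Complex.cosh c ^ 2 := by
  rw [Matrix.exp_smul_of_mul_self_eq_one (pauliX_mul_self i),
    Matrix.exp_smul_of_mul_self_eq_one (pauliX_mul_self j)]
  simp only [add_mul, mul_add, smul_mul_smul_comm, one_mul, mul_one, Matrix.add_apply,
    Matrix.smul_apply, Matrix.one_apply_eq, pauliX_apply_self, pauliX_mul_pauliX_apply_self hij,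
    smul_eq_mul]
  ring

theorem exp_mixer_conj_pauliZZ_apply_self {i j : Fin n} (hij : i ≠ j) (c : ℂ) (w : Str n) :
    (exp (c • mixer n) * (PauliZ n i * PauliZ n j) * exp ((-c) • mixer n)) w w
      = Complex.cosh (2 * c) ^ 2 * (sgn (w i) * sgn (w j) : ℝ) := by
  rw [exp_mixer_conj_pauliZZ hij, PauliZ, PauliZ, Matrix.diagonal_mul_diagonal,
    Matrix.mul_diagonal, exp_smul_pauliX_mul_exp_smul_pauliX_apply_self hij, Complex.ofReal_mul]

theorem exp_mixer_conj_CZop_apply_self (G : SimpleGraph (Fin n)) [DecidableRel G.Adj]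
    (w : Str n) (β : ℝ) :
    (mexp ((Complex.I * β) • mixer n) * CZop n G * mexp ((-(Complex.I * β)) • mixer n)) w w
      = ((Real.cos (2 * β) ^ 2 * CZval n G w : ℝ) : ℂ) := by
  have hcosh : Complex.cosh (2 * (Complex.I * β)) = Real.cos (2 * β) := by
    rw [show 2 * (Complex.I * β) = ((2 * β : ℝ) : ℂ) * Complex.I by push_cast; ring,
      Complex.cosh_mul_I, Complex.ofReal_cos]
  have hedge : ∀ e ∈ G.edgeFinset,
      (mexp ((Complex.I * β) • mixer n) * ZZedge n e * mexp ((-(Complex.I * β)) • mixer n)) w w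
        = (Real.cos (2 * β) ^ 2 : ℝ) *
          (Sym2.lift ⟨fun i j => sgn (w i) * sgn (w j), fun i j => by ring⟩ e : ℝ) := by
    intro e he
    induction e with
    | _ i j =>
      rw [ZZedge, Sym2.lift_mk, Sym2.lift_mk, mexp, mexp,
        exp_mixer_conj_pauliZZ_apply_self (G.ne_of_adj (SimpleGraph.mem_edgeFinset.1 he)), hcosh,
        Complex.ofReal_pow]
  rw [CZop, CZval, mul_neg, neg_mul, Matrix.neg_apply, Matrix.mul_sum, Matrix.sum_mul,
    Matrix.sum_apply, Finset.sum_congr rfl hedge, ← Finset.mul_sum]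
  push_cast
  ring

end Qubits

theorem stmt10 (n : ℕ) (G : SimpleGraph (Fin n)) [DecidableRel G.Adj]
    (w : Str n) (hw : 0 < CZval n G w) (β : ℝ) :
    ((mexp ((Complex.I * β) • mixer n) * CZop n G *
      mexp ((-(Complex.I * β)) • mixer n)) w w).re ≤ CZval n G w := by
  rw [exp_mixer_conj_CZop_apply_self, Complex.ofReal_re]
  exact mul_le_of_le_one_left hw.le (Real.cos_sq_le_one _)
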